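/- arXiv:1606.06128 — 9 statements merged into one kernel-verified Lean document; each statement's English description precedes it below -/
import Mathlib

section
/- Let a₁₀, a₀₁, b₁₀, b₀₁ ∈ ℍ and define Φ : ℍ × ℍ → ℍ × ℍ by Φ(z,w) = (z·a₁₀ + w·a₀₁, z·b₁₀ + w·b₀₁). Then Φ is bijective if and only if b₀₁·(a₁₀ − b₁₀·b₀₁⁻¹·a₀₁) ≠ 0 or a₀₁·(b₁₀ − a₁₀·a₀₁⁻¹·b₀₁) ≠ 0, where the inverse of the zero quaternion is taken to be 0. -/
open scoped Quaternion

lemma aux_bij (a10 a01 b10 b01 : ℍ[ℝ])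
    (h : b01 * (a10 - b10 * b01⁻¹ * a01) ≠ 0) :
    Function.Bijective (fun p : ℍ[ℝ] × ℍ[ℝ] =>
      (p.1 * a10 + p.2 * a01, p.1 * b10 + p.2 * b01)) := by
  rw [mul_ne_zero_iff] at h
  obtain ⟨hb, hd⟩ := h
  set d := a10 - b10 * b01⁻¹ * a01 with hdef
  rw [Function.bijective_iff_has_inverse]
  refine ⟨fun q => ((q.1 - q.2 * b01⁻¹ * a01) * d⁻¹,
      (q.2 - (q.1 - q.2 * b01⁻¹ * a01) * d⁻¹ * b10) * b01⁻¹), ?_, ?_⟩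
  · rintro ⟨z, w⟩
    simp only
    have h1 : z * a10 + w * a01 - (z * b10 + w * b01) * b01⁻¹ * a01 = z * d := by
      rw [hdef]
      rw [add_mul, add_mul, mul_assoc w b01 b01⁻¹, mul_inv_cancel₀ hb, mul_one]
      noncomm_ring
    rw [h1, mul_assoc z d d⁻¹, mul_inv_cancel₀ hd, mul_one]
    rw [Prod.mk.injEq]
    constructor
    · rfl
    · rw [add_sub_cancel_left, mul_assoc, mul_inv_cancel₀ hb, mul_one]
  · rintro ⟨u, v⟩
    simp only
    set z := (u - v * b01⁻¹ * a01) * d⁻¹ with hz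
    rw [Prod.mk.injEq]
    constructor
    · have h2 : (v - z * b10) * b01⁻¹ * a01 = v * b01⁻¹ * a01 - z * (b10 * b01⁻¹ * a01) := by
        noncomm_ring
      rw [h2]
      have h3 : z * a10 + (v * b01⁻¹ * a01 - z * (b10 * b01⁻¹ * a01)) =
          z * d + v * b01⁻¹ * a01 := by
        rw [hdef]; noncomm_ring
      rw [h3, hz, mul_assoc _ d⁻¹ d, inv_mul_cancel₀ hd, mul_one, sub_add_cancel]
    · rw [mul_assoc _ b01⁻¹ b01, inv_mul_cancel₀ hb, mul_one]; noncomm_ring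

/-- invertibility criterion for the left `ℍ`-linear map
`Φ(z,w) = (z·a₁₀ + w·a₀₁, z·b₁₀ + w·b₀₁)` (with the convention `0⁻¹ = 0`). -/
theorem stmt_9 (a10 a01 b10 b01 : ℍ[ℝ])
    (Φ : ℍ[ℝ] × ℍ[ℝ] → ℍ[ℝ] × ℍ[ℝ])
    (hΦ : ∀ z w : ℍ[ℝ], Φ (z, w) = (z * a10 + w * a01, z * b10 + w * b01)) :
    Function.Bijective Φ ↔
      (b01 * (a10 - b10 * b01⁻¹ * a01) ≠ 0 ∨ a01 * (b10 - a10 * a01⁻¹ * b01) ≠ 0) := by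
  have hΦeq : Φ = fun p : ℍ[ℝ] × ℍ[ℝ] =>
      (p.1 * a10 + p.2 * a01, p.1 * b10 + p.2 * b01) := by
    funext p
    exact hΦ p.1 p.2
  constructor
  · -- bijective → condition, by contraposition
    intro hbij
    by_contra hcon
    push_neg at hcon
    obtain ⟨h1, h2⟩ := hcon
    by_cases hb : b01 = 0
    · by_cases ha : a01 = 0
      · -- both zero: Φ (0,1) = Φ (0,0)
        have := hbij.injective (a₁ := ((0 : ℍ[ℝ]), (1 : ℍ[ℝ]))) (a₂ := (0, 0)) (by
          rw [hΦ, hΦ]; simp [hb, ha])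
        simp at this
      · -- a01 ≠ 0, b01 = 0 ⇒ b10 = 0 ⇒ not surjective onto (0,1)
        have hb10 : b10 = 0 := by
          rw [hb] at h2
          simpa [ha] using h2
        obtain ⟨⟨z, w⟩, hzw⟩ := hbij.surjective ((0 : ℍ[ℝ]), (1 : ℍ[ℝ]))
        rw [hΦ] at hzw
        simp [hb, hb10] at hzw
    · -- b01 ≠ 0 ⇒ d = 0 ⇒ not injective
      have hd : a10 - b10 * b01⁻¹ * a01 = 0 := by
        rcases mul_eq_zero.mp h1 with h | h
        · exact absurd h hb
        · exact h
      have := hbij.injective (a₁ := ((1 : ℍ[ℝ]), -(b10 * b01⁻¹))) (a₂ := (0, 0)) (by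
        rw [hΦ, hΦ]
        simp only [one_mul, zero_mul, add_zero, neg_mul, Prod.mk.injEq]
        constructor
        · rw [← sub_eq_add_neg]; exact hd
        · rw [mul_assoc, inv_mul_cancel₀ hb, mul_one]; simp)
      simp at this
  · rintro (h | h)
    · rw [hΦeq]
      exact aux_bij a10 a01 b10 b01 h
    · have hbij := aux_bij b10 b01 a10 a01 h
      have : Φ = Prod.swap ∘ (fun p : ℍ[ℝ] × ℍ[ℝ] =>
          (p.1 * b10 + p.2 * b01, p.1 * a10 + p.2 * a01)) := by
        funext p
        rw [show p = (p.1, p.2) from rfl, hΦ]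
        rfl
      rw [this]
      exact Function.Bijective.comp Prod.swap_bijective hbij
end

section
/- Let α ∈ ℍ, and define f : ℍ × ℍ → ℍ × ℍ by f(z,w) = (z·α, w·α). Let a, b, c, d ∈ ℍ and define φ : ℍ × ℍ → ℍ × ℍ by φ(z,w) = (z·a + w·c, z·b + w·d). Then φ ∘ f = f ∘ φ if and only if each of a, b, c, d commutes with α (i.e. a·α = α·a, b·α = α·b, c·α = α·c, d·α = α·d). -/
open scoped Quaternion

/-- the linear maps `φ(z,w) = (z·a + w·c, z·b + w·d)` commuting with
`f(z,w) = (z·α, w·α)` are exactly those whose coefficients commute with `α`. -/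
theorem stmt_10 (α : ℍ[ℝ]) (a b c d : ℍ[ℝ])
    (f φ : ℍ[ℝ] × ℍ[ℝ] → ℍ[ℝ] × ℍ[ℝ])
    (hf : ∀ z w : ℍ[ℝ], f (z, w) = (z * α, w * α))
    (hφ : ∀ z w : ℍ[ℝ], φ (z, w) = (z * a + w * c, z * b + w * d)) :
    φ ∘ f = f ∘ φ ↔ (a * α = α * a ∧ b * α = α * b ∧ c * α = α * c ∧ d * α = α * d) := by
  constructor
  · intro h
    have h1 := congrFun h (1, 0)
    have h2 := congrFun h (0, 1)
    simp only [Function.comp_apply, hf, hφ, one_mul, zero_mul, mul_zero, add_zero,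
      zero_add] at h1 h2
    exact ⟨(Prod.mk.injEq _ _ _ _ ▸ h1).1.symm, (Prod.mk.injEq _ _ _ _ ▸ h1).2.symm,
      (Prod.mk.injEq _ _ _ _ ▸ h2).1.symm, (Prod.mk.injEq _ _ _ _ ▸ h2).2.symm⟩
  · rintro ⟨ha, hb, hc, hd⟩
    funext p
    obtain ⟨z, w⟩ := p
    simp only [Function.comp_apply, hf, hφ, add_mul, mul_assoc, ha, hb, hc, hd]
end

section
/- Let α, β ∈ ℍ with 0 < |α| < |β|, and define f : ℍ × ℍ → ℍ × ℍ by f(z,w) = (z·α, w·β). Let a, b, c, d ∈ ℍ and define φ : ℍ × ℍ → ℍ × ℍ by φ(z,w) = (z·a + w·c, z·b + w·d). Then φ ∘ f = f ∘ φ if and only if b = 0, c = 0, a·α = α·a, and d·β = β·d; that is, every linear map commuting with f is diagonal, of the form φ(z,w) = (z·a, w·d) with a commuting with α and d commuting with β. -/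
open scoped Quaternion

/-- if `0 < |α| < |β|`, the linear maps commuting with
`f(z,w) = (z·α, w·β)` are exactly the diagonal ones `φ(z,w) = (z·a, w·d)` with
`a` commuting with `α` and `d` commuting with `β`. -/
theorem stmt_12 (α β : ℍ[ℝ]) (hα : 0 < ‖α‖) (hαβ : ‖α‖ < ‖β‖) (a b c d : ℍ[ℝ])
    (f φ : ℍ[ℝ] × ℍ[ℝ] → ℍ[ℝ] × ℍ[ℝ])
    (hf : ∀ z w : ℍ[ℝ], f (z, w) = (z * α, w * β))
    (hφ : ∀ z w : ℍ[ℝ], φ (z, w) = (z * a + w * c, z * b + w * d)) :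
    φ ∘ f = f ∘ φ ↔ (b = 0 ∧ c = 0 ∧ a * α = α * a ∧ d * β = β * d) := by
  constructor
  · intro h
    have h10 := congrFun h (1, 0)
    have h01 := congrFun h (0, 1)
    simp only [Function.comp_apply, hf, hφ, one_mul, zero_mul, add_zero, zero_add,
      mul_zero, mul_one, Prod.mk.injEq] at h10 h01
    obtain ⟨hαa, hαb⟩ := h10
    obtain ⟨hβc, hβd⟩ := h01
    have hb : b = 0 := by
      by_contra hb
      have := congrArg (‖·‖) hαb
      simp only [norm_mul] at this
      have hbn : (0:ℝ) < ‖b‖ := norm_pos_iff.mpr hb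
      nlinarith
    have hc : c = 0 := by
      by_contra hc
      have := congrArg (‖·‖) hβc
      simp only [norm_mul] at this
      have hcn : (0:ℝ) < ‖c‖ := norm_pos_iff.mpr hc
      nlinarith
    exact ⟨hb, hc, hαa.symm, hβd.symm⟩
  · rintro ⟨rfl, rfl, ha, hd⟩
    funext p
    obtain ⟨z, w⟩ := p
    simp only [Function.comp_apply, hf, hφ, mul_zero, add_zero, zero_add]
    rw [mul_assoc z a, mul_assoc w d, ha, hd, mul_assoc, mul_assoc]
end

section
/- Let α, β ∈ ℍ. There exists a nonzero quaternion x with β·x = x·α if and only if the real parts of α and β are equal and |α| = |β| (i.e. α and β are conjugate in ℍ). -/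
open scoped Quaternion

open Quaternion in
lemma stmt13_key (α β y : ℍ[ℝ]) (hre : α.re = β.re)
    (hns : Quaternion.normSq α = Quaternion.normSq β) :
    β * (β * y - y * star α) = (β * y - y * star α) * α := by
  rw [Quaternion.normSq_def', Quaternion.normSq_def'] at hns
  ext <;>
    simp only [Quaternion.re_mul, Quaternion.imI_mul, Quaternion.imJ_mul, Quaternion.imK_mul,
      Quaternion.re_sub, Quaternion.imI_sub, Quaternion.imJ_sub, Quaternion.imK_sub,
      Quaternion.re_star, Quaternion.imI_star, Quaternion.imJ_star, Quaternion.imK_star]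
  · linear_combination (-2*(β.re*y.re - β.imI*y.imI - β.imJ*y.imJ - β.imK*y.imK)) * hre
      + y.re * hns
  · linear_combination (-2*(β.re*y.imI + β.imI*y.re + β.imJ*y.imK - β.imK*y.imJ)) * hre
      + y.imI * hns
  · linear_combination (-2*(β.re*y.imJ - β.imI*y.imK + β.imJ*y.re + β.imK*y.imI)) * hre
      + y.imJ * hns
  · linear_combination (-2*(β.re*y.imK + β.imI*y.imJ - β.imJ*y.imI + β.imK*y.re)) * hre
      + y.imK * hns

/-- there is a nonzero quaternion `x` with `β·x = x·α` iff `α` and `β`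
have the same real part and the same norm (i.e. are conjugate in `ℍ`). -/
theorem stmt_13 (α β : ℍ[ℝ]) :
    (∃ x : ℍ[ℝ], x ≠ 0 ∧ β * x = x * α) ↔ (α.re = β.re ∧ ‖α‖ = ‖β‖) := by
  constructor
  · rintro ⟨x, hx, h⟩
    have hre : ∀ a b : ℍ[ℝ], (a * b).re = (b * a).re := by
      intro a b; simp [Quaternion.re_mul]; ring
    constructor
    · have hβ : β = x * α * x⁻¹ := by
        rw [← h, mul_assoc, mul_inv_cancel₀ hx, mul_one]
      calc α.re = (α * (x⁻¹ * x)).re := by rw [inv_mul_cancel₀ hx, mul_one]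
        _ = ((α * x⁻¹) * x).re := by rw [mul_assoc]
        _ = (x * (α * x⁻¹)).re := (hre _ _).symm
        _ = β.re := by rw [← mul_assoc, ← hβ]
    · have h' := congrArg norm h
      rw [norm_mul, norm_mul, mul_comm ‖x‖] at h'
      exact (mul_right_cancel₀ (norm_ne_zero_iff.mpr hx) h').symm
  · rintro ⟨hre, hnorm⟩
    have hns : Quaternion.normSq α = Quaternion.normSq β := by
      rw [Quaternion.normSq_eq_norm_mul_self, Quaternion.normSq_eq_norm_mul_self, hnorm]
    by_cases h1 : β * 1 - 1 * star α ≠ 0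
    · exact ⟨_, h1, stmt13_key α β 1 hre hns⟩
    by_cases h2 : β * ⟨0,1,0,0⟩ - ⟨0,1,0,0⟩ * star α ≠ 0
    · exact ⟨_, h2, stmt13_key α β _ hre hns⟩
    by_cases h3 : β * ⟨0,0,1,0⟩ - ⟨0,0,1,0⟩ * star α ≠ 0
    · exact ⟨_, h3, stmt13_key α β _ hre hns⟩
    push_neg at h1 h2 h3
    rw [sub_eq_zero] at h1 h2 h3
    refine ⟨1, one_ne_zero, ?_⟩
    have hαβ : α = β := by
      rw [Quaternion.ext_iff] at h1 h2 h3
      erw [Quaternion.re_mul, Quaternion.imI_mul, Quaternion.imJ_mul, Quaternion.imK_mul,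
        Quaternion.re_mul, Quaternion.imI_mul, Quaternion.imJ_mul, Quaternion.imK_mul] at h2 h3
      simp only [Quaternion.re_mul, Quaternion.imI_mul, Quaternion.imJ_mul, Quaternion.imK_mul,
        Quaternion.re_one, Quaternion.imI_one, Quaternion.imJ_one, Quaternion.imK_one,
        Quaternion.re_star, Quaternion.imI_star, Quaternion.imJ_star, Quaternion.imK_star,
        mul_zero, mul_one, zero_mul, one_mul, mul_neg, neg_zero, add_zero, zero_add,
        sub_zero, zero_sub, neg_neg] at h1 h2 h3
      obtain ⟨a1,a2,a3,a4⟩ := h1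
      obtain ⟨b1,b2,b3,b4⟩ := h2
      obtain ⟨c1,c2,c3,c4⟩ := h3
      ext <;> linarith
    rw [hαβ, one_mul, mul_one]
end

section
/- Let α ∈ ℝ (viewed as a real quaternion), let λ ∈ ℍ with λ ≠ 0, and let a, c ∈ ℍ. Define f : ℍ × ℍ → ℍ × ℍ by f(z,w) = (z·α + w·λ, w·α) and φ : ℍ × ℍ → ℍ × ℍ by φ(z,w) = (z·a + w·c, w·(λ·a·λ⁻¹)). Then φ ∘ f = f ∘ φ. -/
open scoped Quaternion

/-- for real `α` and `λ ≠ 0`, the maps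
`φ(z,w) = (z·a + w·c, w·(λ·a·λ⁻¹))` commute with `f(z,w) = (z·α + w·λ, w·α)`. -/
theorem stmt_15 (α : ℝ) (lam : ℍ[ℝ]) (hlam : lam ≠ 0) (a c : ℍ[ℝ])
    (f φ : ℍ[ℝ] × ℍ[ℝ] → ℍ[ℝ] × ℍ[ℝ])
    (hf : ∀ z w : ℍ[ℝ], f (z, w) = (z * (α : ℍ[ℝ]) + w * lam, w * (α : ℍ[ℝ])))
    (hφ : ∀ z w : ℍ[ℝ], φ (z, w) = (z * a + w * c, w * (lam * a * lam⁻¹))) :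
    φ ∘ f = f ∘ φ := by
  funext zw
  obtain ⟨z, w⟩ := zw
  simp only [Function.comp_apply, hf, hφ]
  have hinv : lam⁻¹ * lam = 1 := inv_mul_cancel₀ hlam
  rw [Prod.mk.injEq]
  constructor
  · simp only [add_mul, mul_assoc, hinv, mul_one, Quaternion.coe_mul_eq_smul,
      Quaternion.mul_coe_eq_smul, mul_smul_comm, smul_mul_assoc]
    abel
  · simp only [mul_assoc, Quaternion.coe_mul_eq_smul, Quaternion.mul_coe_eq_smul,
      mul_smul_comm, smul_mul_assoc]
end

section
/- Let p ≥ 1 be a natural number, let β, b ∈ ℝ (viewed as real quaternions), and let λ, a ∈ ℍ. Define f : ℍ × ℍ → ℍ × ℍ by f(z,w) = (z·β^p + w^p·λ, w·β) and φ : ℍ × ℍ → ℍ × ℍ by φ(z,w) = (z·b^p + w^p·a, w·b). Then φ ∘ f = f ∘ φ. -/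
open scoped Quaternion

/-- for real `β, b`, the maps `φ(z,w) = (z·b^p + w^p·a, w·b)` commute
with `f(z,w) = (z·β^p + w^p·λ, w·β)` (automorphisms in case (B)). -/
theorem stmt_16 (p : ℕ) (hp : 1 ≤ p) (β b : ℝ) (lam a : ℍ[ℝ])
    (f φ : ℍ[ℝ] × ℍ[ℝ] → ℍ[ℝ] × ℍ[ℝ])
    (hf : ∀ z w : ℍ[ℝ], f (z, w) = (z * (β : ℍ[ℝ]) ^ p + w ^ p * lam, w * (β : ℍ[ℝ])))
    (hφ : ∀ z w : ℍ[ℝ], φ (z, w) = (z * (b : ℍ[ℝ]) ^ p + w ^ p * a, w * (b : ℍ[ℝ]))) :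
    φ ∘ f = f ∘ φ := by
  funext zw
  obtain ⟨z, w⟩ := zw
  have hβ : ∀ x : ℍ[ℝ], Commute (β : ℍ[ℝ]) x := fun x => Quaternion.coe_commute β x
  have hb : ∀ x : ℍ[ℝ], Commute (b : ℍ[ℝ]) x := fun x => Quaternion.coe_commute b x
  have h1 : (w * (β : ℍ[ℝ])) ^ p = w ^ p * (β : ℍ[ℝ]) ^ p := ((hβ w).symm.mul_pow p)
  have h2 : (w * (b : ℍ[ℝ])) ^ p = w ^ p * (b : ℍ[ℝ]) ^ p := ((hb w).symm.mul_pow p)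
  simp only [Function.comp_apply, hf, hφ, h1, h2, Prod.mk.injEq]
  constructor
  · rw [add_mul, add_mul, mul_assoc, mul_assoc, mul_assoc, mul_assoc,
      ((hβ ((b:ℍ[ℝ])^p)).pow_left p).eq, ((hb lam).pow_left p).symm.eq,
      ((hβ a).pow_left p).eq, ← mul_assoc, ← mul_assoc]
    simp only [mul_assoc]
    abel
  · rw [mul_assoc, mul_assoc, (hβ (b:ℍ[ℝ])).eq]
end

section
/- Fix a natural number p ≥ 1. For b ∈ ℝ and a ∈ ℍ, define φ_{b,a} : ℍ × ℍ → ℍ × ℍ by φ_{b,a}(z,w) = (z·b^p + w^p·a, w·b). Then for all b₁, b₂ ∈ ℝ and a₁, a₂ ∈ ℍ one has the composition law φ_{b₁,a₁} ∘ φ_{b₂,a₂} = φ_{b₁·b₂, a₂·b₁^p + b₂^p·a₁}; moreover, for every b ∈ ℝ with b ≠ 0 and every a ∈ ℍ, the map φ_{b,a} is bijective with inverse φ_{b⁻¹, −b^{−2p}·a}. In particular the maps φ_{b,a} with b ∈ ℝ ∖ {0}, a ∈ ℍ form a group of bijections of ℍ × ℍ under composition, with identity φ_{1,0}. -/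
open scoped Quaternion

/-- composition law and inverses for the family
`φ_{b,a}(z,w) = (z·b^p + w^p·a, w·b)`, `b ∈ ℝ ∖ {0}`, `a ∈ ℍ`, which thus forms a
group of bijections of `ℍ²` with identity `φ_{1,0}`. -/
theorem stmt_17 (p : ℕ) (hp : 1 ≤ p)
    (Φ : ℝ → ℍ[ℝ] → ℍ[ℝ] × ℍ[ℝ] → ℍ[ℝ] × ℍ[ℝ])
    (hΦ : ∀ (b : ℝ) (a : ℍ[ℝ]) (z w : ℍ[ℝ]),
      Φ b a (z, w) = (z * (b : ℍ[ℝ]) ^ p + w ^ p * a, w * (b : ℍ[ℝ]))) :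
    (∀ (b₁ b₂ : ℝ) (a₁ a₂ : ℍ[ℝ]),
        Φ b₁ a₁ ∘ Φ b₂ a₂ =
          Φ (b₁ * b₂) (a₂ * (b₁ : ℍ[ℝ]) ^ p + (b₂ : ℍ[ℝ]) ^ p * a₁)) ∧
      (∀ (b : ℝ), b ≠ 0 → ∀ a : ℍ[ℝ],
        Function.Bijective (Φ b a) ∧
          Function.LeftInverse (Φ b⁻¹ (-((b : ℍ[ℝ]) ^ (2 * p))⁻¹ * a)) (Φ b a) ∧
          Function.RightInverse (Φ b⁻¹ (-((b : ℍ[ℝ]) ^ (2 * p))⁻¹ * a)) (Φ b a)) ∧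
      Φ 1 0 = id := by
  have hcomp : ∀ (b₁ b₂ : ℝ) (a₁ a₂ : ℍ[ℝ]),
      Φ b₁ a₁ ∘ Φ b₂ a₂ =
        Φ (b₁ * b₂) (a₂ * (b₁ : ℍ[ℝ]) ^ p + (b₂ : ℍ[ℝ]) ^ p * a₁) := by
    intro b₁ b₂ a₁ a₂
    funext zw
    obtain ⟨z, w⟩ := zw
    simp only [Function.comp_apply, hΦ]
    refine Prod.ext ?_ ?_
    · show (z * (b₂:ℍ[ℝ])^p + w^p * a₂) * (b₁:ℍ[ℝ])^p + (w * (b₂:ℍ[ℝ]))^p * a₁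
        = z * ((b₁*b₂ : ℝ):ℍ[ℝ])^p + w^p * (a₂ * (b₁:ℍ[ℝ])^p + (b₂:ℍ[ℝ])^p * a₁)
      rw [((Quaternion.coe_commute b₂ w).symm).mul_pow]
      simp only [← Quaternion.coe_pow, Quaternion.mul_coe_eq_smul, Quaternion.coe_mul_eq_smul,
        smul_mul_assoc, mul_smul_comm, mul_add, add_mul, mul_pow]
      match_scalars <;> ring
    · show w * (b₂:ℍ[ℝ]) * (b₁:ℍ[ℝ]) = w * ((b₁ * b₂ : ℝ) : ℍ[ℝ])
      rw [mul_assoc, ← Quaternion.coe_mul, mul_comm b₂ b₁]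
  have hid : Φ 1 0 = id := by
    funext zw
    obtain ⟨z, w⟩ := zw
    simp [hΦ]
  have hinv : ∀ (b : ℝ), b ≠ 0 → ∀ a : ℍ[ℝ],
      Function.LeftInverse (Φ b⁻¹ (-((b : ℍ[ℝ]) ^ (2 * p))⁻¹ * a)) (Φ b a) ∧
      Function.RightInverse (Φ b⁻¹ (-((b : ℍ[ℝ]) ^ (2 * p))⁻¹ * a)) (Φ b a) := by
    intro b hb a
    constructor
    · intro zw
      rw [← Function.comp_apply (f := Φ b⁻¹ _), hcomp, inv_mul_cancel₀ hb]
      have h2 : a * ((b⁻¹ : ℝ) : ℍ[ℝ]) ^ p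
          + (b:ℍ[ℝ])^p * (-((b : ℍ[ℝ]) ^ (2 * p))⁻¹ * a) = 0 := by
        simp only [← Quaternion.coe_pow, ← Quaternion.coe_inv, mul_neg, neg_mul,
          Quaternion.mul_coe_eq_smul, Quaternion.coe_mul_eq_smul, smul_mul_assoc]
        match_scalars
        field_simp
        ring_nf
        rw [pow_mul, inv_pow, sq, mul_assoc, mul_inv_cancel₀ (pow_ne_zero _ hb), mul_one, neg_add_cancel]
      rw [h2, hid, id_eq]
    · intro zw
      rw [← Function.comp_apply (f := Φ b _), hcomp, mul_inv_cancel₀ hb]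
      have h2 : -((b : ℍ[ℝ]) ^ (2 * p))⁻¹ * a * (b:ℍ[ℝ])^p
          + ((b⁻¹ : ℝ) : ℍ[ℝ]) ^ p * a = 0 := by
        simp only [← Quaternion.coe_pow, ← Quaternion.coe_inv, mul_neg, neg_mul,
          Quaternion.mul_coe_eq_smul, Quaternion.coe_mul_eq_smul, smul_mul_assoc]
        match_scalars
        field_simp
        ring_nf
        rw [pow_mul, inv_pow, sq, mul_assoc, mul_inv_cancel₀ (pow_ne_zero _ hb), mul_one, neg_add_cancel]
      rw [h2, hid, id_eq]
  refine ⟨hcomp, fun b hb a => ?_, hid⟩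
  obtain ⟨hl, hr⟩ := hinv b hb a
  exact ⟨⟨hl.injective, hr.surjective⟩, hl, hr⟩
end

section
/- Let α ∈ ℍ be a non-real quaternion and let c ∈ ℍ with c ≠ 0 and c·α = α·c. Then the affine map x ↦ α·x·α⁻¹ + c has no fixed point in ℍ; that is, for every x ∈ ℍ, α·x·α⁻¹ + c ≠ x. -/
open scoped Quaternion

lemma re_mul_comm' (a b : ℍ[ℝ]) : (a * b).re = (b * a).re := by
  simp [Quaternion.re_mul]; ring

/-- for `α` non-real and `c ≠ 0` commuting with `α`, the affine map
`x ↦ α·x·α⁻¹ + c` has no fixed point in `ℍ`. -/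
theorem stmt_18 (α c : ℍ[ℝ]) (hα : α.im ≠ 0) (hc : c ≠ 0) (hcomm : c * α = α * c) :
    ∀ x : ℍ[ℝ], α * x * α⁻¹ + c ≠ x := by
  intro x hx
  have hα0 : α ≠ 0 := fun h => hα (by simp [h])
  have h1 : α * x + c * α = x * α := by
    have := congrArg (· * α) hx
    simpa [add_mul, mul_assoc, inv_mul_cancel₀ hα0] using this
  have hq : c * α = x * α - α * x := eq_sub_iff_add_eq.mpr (by rw [add_comm]; exact h1)
  -- α commutes with star c
  have hstar : α * star c = star c * α := by
    rw [Quaternion.star_eq_two_re_sub]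
    simp [mul_sub, sub_mul, Quaternion.coe_mul_eq_smul, Quaternion.mul_coe_eq_smul, hcomm]
  have hre : ((c * α) * star (c * α)).re = 0 := by
    have e1 : (c * α) * star (c * α) = x * α * (star α * star c) - α * x * (star α * star c) := by
      rw [star_mul]
      conv_lhs => rw [hq]
      rw [sub_mul]
    have e2 : (x * α * (star α * star c)).re = (α * x * (star α * star c)).re := by
      have c1 : x * α * (star α * star c) = x * (α * star α) * star c := by
        simp only [mul_assoc]
      have c2 : (α * (x * (star α * star c))).re = (x * (star α * star c) * α).re :=
        re_mul_comm' _ _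
      have c3 : x * (star α * star c) * α = x * (star α * α) * star c := by
        calc x * (star α * star c) * α = x * star α * (star c * α) := by
              simp only [mul_assoc]
        _ = x * star α * (α * star c) := by rw [hstar]
        _ = x * (star α * α) * star c := by simp only [mul_assoc]
      rw [c1, mul_assoc α, c2, c3, Quaternion.self_mul_star, Quaternion.star_mul_self]
    rw [e1]
    simp [Quaternion.re_sub, e2]
  have hnq : Quaternion.normSq (c * α) = 0 := by
    have h := Quaternion.self_mul_star (c * α)
    have h2 : ((c * α) * star (c * α)).re = Quaternion.normSq (c * α) := by rw [h]; simp
    rw [← h2, hre]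
  have hq0 : c * α = 0 := Quaternion.normSq_eq_zero.mp hnq
  rcases mul_eq_zero.mp hq0 with h | h
  · exact hc h
  · exact hα0 h
end

section
/- Let α ∈ ℍ be a non-real quaternion and let c ∈ ℍ satisfy c·α = conj(α)·c, where conj denotes quaternionic conjugation. Then there exists a unique x ∈ ℍ such that x·α = conj(α)·x and α·x·α⁻¹ + c = x; that is, the roto-translation x ↦ α·x·α⁻¹ + c has a unique fixed point on the 2-plane { x ∈ ℍ : x·α = conj(α)·x }. -/
open scoped Quaternion

/-- for `α` non-real and `c` in the plane `{x : x·α = conj(α)·x}`, the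
roto-translation `x ↦ α·x·α⁻¹ + c` has a unique fixed point on that plane. -/
theorem stmt_19 (α c : ℍ[ℝ]) (hα : α.im ≠ 0) (hc : c * α = star α * c) :
    ∃! x : ℍ[ℝ], x * α = star α * x ∧ α * x * α⁻¹ + c = x := by
  have hα0 : α ≠ 0 := by intro h; apply hα; simp [h]
  set β : ℍ[ℝ] := star α - α with hβdef
  have hβ0 : β ≠ 0 := by
    intro h
    apply hα
    rw [sub_eq_zero] at h
    have hI := congrArg QuaternionAlgebra.imI h
    have hJ := congrArg QuaternionAlgebra.imJ h
    have hK := congrArg QuaternionAlgebra.imK h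
    simp only [Quaternion.imI_star, Quaternion.imJ_star, Quaternion.imK_star] at hI hJ hK
    ext <;> simp [QuaternionAlgebra.im] <;> linarith
  have hstar : star α * α = α * star α := by
    rw [Quaternion.star_mul_self, Quaternion.self_mul_star]
  have hcomm : β * α = α * β := by rw [hβdef, sub_mul, mul_sub, hstar]
  have hcomm' : β * star α = star α * β := by rw [hβdef, sub_mul, mul_sub, hstar]
  have hinv : β⁻¹ * α = α * β⁻¹ := ((show Commute β α from hcomm).inv_left₀).eq
  have hinv' : β⁻¹ * star α = star α * β⁻¹ :=
    ((show Commute β (star α) from hcomm').inv_left₀).eq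
  refine ⟨β⁻¹ * (c * α), ⟨?_, ?_⟩, ?_⟩
  · -- plane membership
    calc β⁻¹ * (c * α) * α = β⁻¹ * (star α * c * α) := by rw [mul_assoc, ← hc, mul_assoc]
      _ = star α * (β⁻¹ * (c * α)) := by
          rw [← mul_assoc, ← mul_assoc, hinv', mul_assoc, mul_assoc]
  · -- fixed point
    have h1 : α * (β⁻¹ * (c * α)) = β⁻¹ * (α * (c * α)) := by
      rw [← mul_assoc, ← hinv, mul_assoc]
    have h2 : c * α = β⁻¹ * (β * (c * α)) := by
      rw [← mul_assoc, inv_mul_cancel₀ hβ0, one_mul]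
    have key : α * (β⁻¹ * (c * α)) + c * α = β⁻¹ * (c * α) * α := by
      calc α * (β⁻¹ * (c * α)) + c * α
          = β⁻¹ * (α * (c * α)) + β⁻¹ * (β * (c * α)) := by rw [h1, ← h2]
        _ = β⁻¹ * ((α + β) * (c * α)) := by rw [add_mul, mul_add]
        _ = β⁻¹ * (star α * (c * α)) := by rw [hβdef, add_sub_cancel]
        _ = β⁻¹ * (c * α * α) := by rw [← mul_assoc (star α) c α, ← hc]
        _ = β⁻¹ * (c * α) * α := by rw [mul_assoc β⁻¹ (c * α) α]
    have : (α * (β⁻¹ * (c * α)) * α⁻¹ + c) * α = β⁻¹ * (c * α) * α := by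
      rw [add_mul, mul_assoc (α * (β⁻¹ * (c * α))), inv_mul_cancel₀ hα0, mul_one, ← key]
    exact mul_right_cancel₀ hα0 this
  · -- uniqueness
    rintro y ⟨hy1, hy2⟩
    have h3 : α * y + c * α = y * α := by
      have := congrArg (· * α) hy2
      simpa [add_mul, mul_assoc, inv_mul_cancel₀ hα0] using this
    have h4 : c * α = β * y := by
      rw [hβdef, sub_mul, ← hy1]
      exact eq_sub_of_add_eq' h3
    rw [h4, ← mul_assoc, inv_mul_cancel₀ hβ0, one_mul]
end
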